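/- arXiv:0908.1582 — 2 statements merged into one kernel-verified Lean document; each statement's English description precedes it below -/
import Mathlib

section
/- Let ℓ > 0 and for k ≥ 0 let T_ℓ^k be the k-th finite approximation to the ternary Cantor set of length ℓ, with the metric induced from ℝ. Then the magnitude of T_ℓ^k is defined and equals 1 + 2^k·tanh(ℓ/(2·3^k)) + (1/2)·Σ_{i=1}^{k} 2^i·tanh(ℓ/(2·3^i)). -/
/-!
If `y` is the leftmost point of a finite set `s ⊆ ℝ` and `x < y`, then `y` lies between `x` and
every point of `s`, so `exp (-|x - u|) = exp (-|x - y|) · exp (-|y - u|)` for `u ∈ s`. Hence a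
weighting of `s` extends to `s ∪ {x}` by moving a mass from `y` to `x`, and the magnitude grows
by `tanh (|x - y| / 2)`. By induction, `x₀ < ⋯ < xₙ` has magnitude
`1 + ∑ tanh ((xᵢ₊₁ - xᵢ) / 2)`. Listing `T_ℓ^{k+1}` as two copies of `T_{ℓ/3}^k` separated by a
gap of length `ℓ / 3`, the gap sum `G_k(ℓ)` obeys `G_{k+1}(ℓ) = 2 G_k(ℓ / 3) + tanh (ℓ / 6)`,
which unrolls to the stated formula.
-/

open Finset

theorem Real.tanh_half_eq (d : ℝ) :
    Real.tanh (d / 2) = (1 - Real.exp (-d)) / (1 + Real.exp (-d)) := by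
  have hsq : Real.exp (-d) = Real.exp (-(d / 2)) * Real.exp (-(d / 2)) := by
    rw [← Real.exp_add]; ring_nf
  have hinv : Real.exp (d / 2) * Real.exp (-(d / 2)) = 1 := by
    rw [← Real.exp_add, add_neg_cancel, Real.exp_zero]
  rw [Real.tanh_eq_sinh_div_cosh, Real.sinh_eq, Real.cosh_eq, hsq]
  have := Real.exp_pos (d / 2)
  have := Real.exp_pos (-(d / 2))
  field_simp
  linear_combination (2 * Real.exp (-(d / 2))) * hinv

def IsWeighting {X : Type*} [PseudoMetricSpace X] (s : Finset X) (w : X → ℝ) : Prop :=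
  ∀ x ∈ s, ∑ x' ∈ s, Real.exp (-dist x x') * w x' = 1

section Weighting

variable {X : Type*} [DecidableEq X]

theorem sum_mul_update_sub_single {s : Finset X} {x y : X} (hx : x ∉ s) (hy : y ∈ s)
    (e w : X → ℝ) (a f : ℝ) :
    ∑ u ∈ s, e u * Function.update (w - Pi.single y f) x a u = ∑ u ∈ s, e u * w u - e y * f := by
  have hupd : ∀ u ∈ s,
      Function.update (w - Pi.single y f) x a u = w u - (Pi.single y f : X → ℝ) u :=
    fun u hu => by rw [Function.update_of_ne (ne_of_mem_of_not_mem hu hx), Pi.sub_apply]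
  simp only [sum_congr rfl fun u hu => congrArg (e u * ·) (hupd u hu), mul_sub, sum_sub_distrib,
    Pi.single_apply, mul_ite, mul_zero, sum_ite_eq', if_pos hy]

variable [PseudoMetricSpace X]

/-- If `y ∈ s` lies between `x` and every point of `s`, a weighting of `s` extends to
`insert x s` by moving the mass `q / (1 + q)`, `q = exp (-dist x y)`, from `y` to `x`. -/
theorem IsWeighting.exists_insert {s : Finset X} {w : X → ℝ} (hw : IsWeighting s w) {x y : X}
    (hx : x ∉ s) (hy : y ∈ s) (hsep : ∀ u ∈ s, dist x u = dist x y + dist y u) :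
    ∃ w', IsWeighting (insert x s) w' ∧
      ∑ u ∈ insert x s, w' u = ∑ u ∈ s, w u + Real.tanh (dist x y / 2) := by
  obtain ⟨q, hq⟩ : ∃ q, Real.exp (-dist x y) = q := ⟨_, rfl⟩
  have hq_pos : 0 < 1 + q := by rw [← hq]; positivity
  obtain ⟨f, hf⟩ : ∃ f, q / (1 + q) = f := ⟨_, rfl⟩
  have hqf : q * (1 - f) = f := by rw [← hf]; field_simp; ring
  have htanh : Real.tanh (dist x y / 2) = 1 - 2 * f := by
    rw [Real.tanh_half_eq, hq, ← hf]; field_simp; ring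
  have hexp : ∀ u ∈ s, Real.exp (-dist x u) = q * Real.exp (-dist y u) := fun u hu => by
    rw [hsep u hu, neg_add, Real.exp_add, hq]
  refine ⟨Function.update (w - Pi.single y f) x (1 - f), ?_, ?_⟩
  · intro z hz
    rw [sum_insert hx, Function.update_self, sum_mul_update_sub_single hx hy]
    rcases mem_insert.mp hz with rfl | hz
    · rw [sum_congr rfl fun u hu => by rw [hexp u hu, mul_assoc], ← mul_sum, hw y hy, dist_self,
        neg_zero, Real.exp_zero, hq]
      linear_combination hqf
    · rw [hw z hz, dist_comm z x, hexp z hz, dist_comm z y]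
      linear_combination Real.exp (-dist y z) * hqf
  · have := sum_mul_update_sub_single hx hy (fun _ => 1) w (1 - f) f
    simp only [one_mul] at this
    rw [sum_insert hx, Function.update_self, this, htanh]
    ring

end Weighting

noncomputable def tanhGapSum : List ℝ → ℝ
  | a :: b :: t => Real.tanh ((b - a) / 2) + tanhGapSum (b :: t)
  | _ => 0

theorem exists_isWeighting_of_pairwise_lt :
    ∀ l : List ℝ, l.Pairwise (· < ·) → l ≠ [] →
      ∃ w, IsWeighting l.toFinset w ∧ ∑ x ∈ l.toFinset, w x = 1 + tanhGapSum l
  | [x], _, _ => ⟨fun _ => 1, by simp [IsWeighting], by simp [tanhGapSum]⟩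
  | x :: y :: t, hl, _ => by
    obtain ⟨hxl, hl⟩ := List.pairwise_cons.mp hl
    obtain ⟨w, hw, hsum⟩ := exists_isWeighting_of_pairwise_lt (y :: t) hl (List.cons_ne_nil _ _)
    have hyl : ∀ u ∈ y :: t, y ≤ u := by
      simpa [or_imp, forall_and] using fun u hu => ((List.pairwise_cons.mp hl).1 u hu).le
    have hsep : ∀ u ∈ (y :: t).toFinset, dist x u = dist x y + dist y u := fun u hu => by
      have := hyl u (List.mem_toFinset.mp hu)
      have := hxl y (by simp)
      rw [Real.dist_eq, Real.dist_eq, Real.dist_eq, abs_of_neg (by linarith),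
        abs_of_neg (by linarith), abs_of_nonpos (by linarith)]
      ring
    have hx : x ∉ (y :: t).toFinset := fun hx => (hxl x (List.mem_toFinset.mp hx)).false
    obtain ⟨w', hw', hsum'⟩ := hw.exists_insert hx (by simp) hsep
    refine ⟨w', by rwa [List.toFinset_cons], ?_⟩
    rw [List.toFinset_cons, hsum', hsum, tanhGapSum, Real.dist_eq, abs_sub_comm,
      abs_of_pos (sub_pos.mpr (hxl y (by simp)))]
    ring

theorem tanhGapSum_append : ∀ {l₁ l₂ : List ℝ} {a b : ℝ},
    l₁.getLast? = some a → l₂.head? = some b →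
    tanhGapSum (l₁ ++ l₂) = tanhGapSum l₁ + Real.tanh ((b - a) / 2) + tanhGapSum l₂
  | [x], b' :: t, a, b, ha, hb => by
    obtain rfl : x = a := by simpa using ha
    obtain rfl : b' = b := by simpa using hb
    simp [tanhGapSum]
  | x :: y :: t, l₂, a, b, ha, hb => by
    have ih := tanhGapSum_append (l₁ := y :: t) (by simpa [List.getLast?_cons_cons] using ha) hb
    rw [show x :: y :: t ++ l₂ = x :: y :: (t ++ l₂) from rfl, tanhGapSum, ← List.cons_append, ih,
      tanhGapSum]
    ring

theorem tanhGapSum_map_add (c : ℝ) : ∀ l : List ℝ, tanhGapSum (l.map (· + c)) = tanhGapSum l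
  | [] | [_] => rfl
  | x :: y :: t => by
    rw [List.map_cons, List.map_cons, tanhGapSum, ← List.map_cons (f := (· + c)),
      tanhGapSum_map_add c (y :: t), tanhGapSum, add_sub_add_right_eq_sub]

/-- The points of `T_ℓ^k` in increasing order. -/
noncomputable def cantorList (ℓ : ℝ) : ℕ → List ℝ
  | 0 => [0, ℓ]
  | k + 1 => (cantorList ℓ k).map (· / 3) ++ (cantorList ℓ k).map (· / 3 + 2 * ℓ / 3)

section CantorList

variable (ℓ : ℝ) (k : ℕ)

theorem cantorList_head? : (cantorList ℓ k).head? = some 0 := by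
  induction k with
  | zero => rfl
  | succ k ih => simp [cantorList, List.head?_append, ih]

theorem cantorList_getLast? : (cantorList ℓ k).getLast? = some ℓ := by
  induction k with
  | zero => rfl
  | succ k ih => simp [cantorList, List.getLast?_append, ih]; ring

theorem cantorList_ne_nil : cantorList ℓ k ≠ [] :=
  List.ne_nil_of_mem (List.mem_of_mem_head? (cantorList_head? ℓ k))

theorem cantorList_map_div_three : (cantorList ℓ k).map (· / 3) = cantorList (ℓ / 3) k := by
  induction k with
  | zero => simp [cantorList]
  | succ k ih =>
    simp only [cantorList, List.map_append, List.map_map, ← ih]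
    congr 2
    funext x
    simp only [Function.comp_apply]
    ring

theorem tanhGapSum_cantorList_succ :
    tanhGapSum (cantorList ℓ (k + 1))
      = 2 * tanhGapSum (cantorList (ℓ / 3) k) + Real.tanh (ℓ / 6) := by
  have hright : (cantorList ℓ k).map (· / 3 + 2 * ℓ / 3)
      = (cantorList (ℓ / 3) k).map (· + 2 * ℓ / 3) := by
    rw [← cantorList_map_div_three, List.map_map]; rfl
  rw [cantorList, cantorList_map_div_three, hright,
    tanhGapSum_append (b := 2 * ℓ / 3) (cantorList_getLast? _ k)
      (by simp [List.head?_map, cantorList_head?]),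
    tanhGapSum_map_add, show (2 * ℓ / 3 - ℓ / 3) / 2 = ℓ / 6 by ring]
  ring

theorem tanhGapSum_cantorList :
    tanhGapSum (cantorList ℓ k) = 2 ^ k * Real.tanh (ℓ / (2 * 3 ^ k))
      + (1 / 2) * ∑ i ∈ Icc 1 k, (2 : ℝ) ^ i * Real.tanh (ℓ / (2 * 3 ^ i)) := by
  have hIcc : ∀ g : ℕ → ℝ, ∀ n, ∑ i ∈ Icc 1 n, g i = ∑ i ∈ range n, g (i + 1) :=
    fun g n => by
      rw [← Ico_add_one_right_eq_Icc, sum_Ico_eq_sum_range, Nat.add_sub_cancel]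
      simp only [add_comm 1]
  induction k generalizing ℓ with
  | zero => simp [cantorList, tanhGapSum]
  | succ k ih =>
    have hscale : ∀ i : ℕ, ℓ / 3 / (2 * 3 ^ i) = ℓ / (2 * 3 ^ (i + 1)) := fun i => by
      rw [pow_succ]; ring
    have hsum : ∑ i ∈ range k, (2 : ℝ) ^ (i + 1) * Real.tanh (ℓ / 3 / (2 * 3 ^ (i + 1)))
        = 1 / 2 * ∑ i ∈ range k,
            (2 : ℝ) ^ (i + 1 + 1) * Real.tanh (ℓ / (2 * 3 ^ (i + 1 + 1))) := by
      rw [mul_sum]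
      exact sum_congr rfl fun i _ => by rw [hscale, pow_succ _ (i + 1)]; ring
    rw [tanhGapSum_cantorList_succ, ih, hIcc, hIcc, sum_range_succ', hsum, hscale]
    norm_num
    ring

theorem eq_toFinset_cantorList {T : ℕ → Finset ℝ} (hT0 : T 0 = {0, ℓ})
    (hTsucc : ∀ k, T (k + 1) =
      (T k).image (fun x => x / 3) ∪ (T k).image (fun x => x / 3 + 2 * ℓ / 3)) :
    T k = (cantorList ℓ k).toFinset := by
  induction k with
  | zero => simp [hT0, cantorList]
  | succ k ih =>
    rw [hTsucc, ih, cantorList, List.toFinset_append]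
    congr 1 <;> ext <;> simp

end CantorList

theorem cantorList_isChain {ℓ : ℝ} (hℓ : 0 < ℓ) (k : ℕ) : (cantorList ℓ k).IsChain (· < ·) := by
  induction k with
  | zero => exact List.isChain_pair.mpr hℓ
  | succ k ih =>
    refine List.IsChain.append ?_ ?_ ?_
    · exact (List.isChain_map _).mpr (ih.imp fun a b h => by linarith)
    · exact (List.isChain_map _).mpr (ih.imp fun a b h => by linarith)
    · simp only [List.getLast?_map, List.head?_map, cantorList_getLast?, cantorList_head?,
        Option.map_some, Option.mem_some_iff]
      rintro _ rfl _ rfl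
      linarith

/-- The magnitude of the `k`-th finite approximation `T_ℓ^k` to the ternary Cantor set of
length `ℓ` (defined by `T_ℓ^0 = {0, ℓ}` and
`T_ℓ^{k+1} = (1/3)·T_ℓ^k ∪ ((1/3)·T_ℓ^k + 2ℓ/3)`, with the metric induced from `ℝ`) is
defined and equals `1 + 2^k tanh(ℓ/(2·3^k)) + ½ Σ_{i=1}^k 2^i tanh(ℓ/(2·3^i))`. -/
theorem magnitude_cantor_approximation (ℓ : ℝ) (hℓ : 0 < ℓ) (T : ℕ → Finset ℝ)
    (hT0 : T 0 = {0, ℓ})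
    (hTsucc : ∀ k, T (k + 1) =
      (T k).image (fun x => x / 3) ∪ (T k).image (fun x => x / 3 + 2 * ℓ / 3))
    (k : ℕ) :
    ∃ w : ℝ → ℝ,
      (∀ x ∈ T k, ∑ x' ∈ T k, Real.exp (-dist x x') * w x' = 1) ∧
      ∑ x ∈ T k, w x = 1 + 2 ^ k * Real.tanh (ℓ / (2 * 3 ^ k))
        + (1 / 2) * ∑ i ∈ Finset.Icc 1 k, (2 : ℝ) ^ i * Real.tanh (ℓ / (2 * 3 ^ i)) := by
  rw [eq_toFinset_cantorList ℓ k hT0 hTsucc]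
  obtain ⟨w, hw, hsum⟩ := exists_isWeighting_of_pairwise_lt (cantorList ℓ k)
    (List.isChain_iff_pairwise.mp (cantorList_isChain hℓ k)) (cantorList_ne_nil ℓ k)
  exact ⟨w, hw, by rw [hsum, tanhGapSum_cantorList, add_assoc]⟩
end

section
/- For κ ∈ (−∞, 1] define D_κ : [0,1] → ℝ by D_κ(s) = (1/(√κ·π))·arcsin(√κ·sin(πs)) if 0 < κ ≤ 1, D_κ(s) = (1/π)·sin(πs) if κ = 0, and D_κ(s) = (1/(√(−κ)·π))·arcsinh(√(−κ)·sin(πs)) if κ < 0. Then for every κ ∈ (−∞, 1], the magnitude |C_{ℓ,κ}| := (∫_0^1 exp(−ℓ·D_κ(s)) ds)^{−1} of the circle of circumference ℓ with the κ-metric satisfies |C_{ℓ,κ}| − ℓ/2 → 0 as ℓ → ∞. -/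
/-!
Put `x = π s`. In each geometry `D_κ(s) = Φ(sin x) / π` with `Φ(sin x) ≤ x` (a chord is no
longer than its arc) and `Φ(y) ≥ y - c y³`, so `D_κ(s) = s + O(s³)` at `s = 0`, symmetrically at
`s = 1`, and `D_κ` is bounded below away from the endpoints. Laplace's method at the endpoints
then gives `∫₀¹ exp(-ℓ D_κ) = 2/ℓ + O(ℓ⁻³)`: the defect `exp(-ℓ D_κ(s)) - exp(-ℓ s)` is
`O(ℓ s³ exp(-3ℓs/4))`, which integrates to `O(ℓ⁻³)`, and the middle of the circle contributes
`O(exp(-ηℓ))`. Inverting, `|C_{ℓ,κ}| = ℓ/2 + O(1/ℓ)`.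
-/

open Filter Topology Real Set intervalIntegral MeasureTheory

theorem pow_three_mul_exp_neg_le {x : ℝ} (hx : 0 ≤ x) : x ^ 3 * exp (-x) ≤ 27 := by
  have hle : x / 3 * exp (-(x / 3)) ≤ 1 :=
    (mul_exp_neg_le_exp_neg_one (x / 3)).trans (exp_le_one_iff.2 (by norm_num))
  have hnonneg : 0 ≤ x / 3 * exp (-(x / 3)) := by positivity
  have hcube : x ^ 3 * exp (-x) = 27 * (x / 3 * exp (-(x / 3))) ^ 3 := by
    rw [mul_pow, ← exp_nat_mul]; ring_nf
  rw [hcube]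
  nlinarith [pow_le_one₀ (n := 3) hnonneg hle]

theorem exp_sub_exp_le_mul_exp (u v : ℝ) : exp u - exp v ≤ (u - v) * exp u := by
  have h := mul_le_mul_of_nonneg_left (add_one_le_exp (v - u)) (exp_pos u).le
  rw [← exp_add, add_sub_cancel] at h
  linarith

theorem integral_exp_neg_mul {c : ℝ} (hc : c ≠ 0) (b : ℝ) :
    ∫ s in (0 : ℝ)..b, exp (-c * s) = (1 - exp (-c * b)) / c := by
  rw [integral_comp_mul_left (fun s => exp s) (neg_ne_zero.2 hc), integral_exp]
  simp only [mul_zero, exp_zero, smul_eq_mul]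
  field_simp
  ring

theorem integral_exp_neg_mul_le {c : ℝ} (hc : 0 < c) (b : ℝ) :
    ∫ s in (0 : ℝ)..b, exp (-c * s) ≤ 1 / c := by
  rw [integral_exp_neg_mul hc.ne']
  gcongr
  linarith [exp_pos (-c * b)]

theorem exp_neg_mul_le_of_sub_cube_le {ℓ s g C : ℝ} (hℓ : 0 < ℓ) (hs : 0 ≤ s) (hC : 0 ≤ C)
    (hCs : C * s ^ 2 ≤ 1 / 4) (hg : s - C * s ^ 3 ≤ g) :
    exp (-ℓ * g) ≤ exp (-ℓ * s) + 216 * C / ℓ ^ 2 * exp (-(ℓ / 4) * s) := by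
  have hcube : s ^ 3 * exp (-(ℓ / 2) * s) ≤ 216 / ℓ ^ 3 := by
    have h := pow_three_mul_exp_neg_le (x := ℓ / 2 * s) (by positivity)
    rw [le_div_iff₀ (by positivity)]
    calc s ^ 3 * exp (-(ℓ / 2) * s) * ℓ ^ 3
        = 8 * ((ℓ / 2 * s) ^ 3 * exp (-(ℓ / 2 * s))) := by ring_nf
      _ ≤ 216 := by linarith
  have hdefect : ℓ * (s - g) ≤ ℓ * C * s ^ 3 := by nlinarith
  have hgs : 3 / 4 * s ≤ g := by nlinarith [mul_le_mul_of_nonneg_left hCs hs]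
  have hdecay : exp (-ℓ * g) ≤ exp (-(3 * ℓ / 4) * s) :=
    exp_le_exp.2 (by nlinarith [mul_le_mul_of_nonneg_left hgs hℓ.le])
  calc exp (-ℓ * g) ≤ exp (-ℓ * s) + ℓ * (s - g) * exp (-ℓ * g) := by
        linarith [exp_sub_exp_le_mul_exp (-ℓ * g) (-ℓ * s)]
    _ ≤ exp (-ℓ * s) + ℓ * C * s ^ 3 * exp (-(3 * ℓ / 4) * s) := by
        gcongr exp (-ℓ * s) + ?_
        exact mul_le_mul hdefect hdecay (exp_pos _).le (by positivity)
    _ = exp (-ℓ * s) + ℓ * C * (s ^ 3 * exp (-(ℓ / 2) * s)) * exp (-(ℓ / 4) * s) := by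
        rw [show -(3 * ℓ / 4) * s = -(ℓ / 2) * s + -(ℓ / 4) * s by ring, exp_add]; ring
    _ ≤ exp (-ℓ * s) + ℓ * C * (216 / ℓ ^ 3) * exp (-(ℓ / 4) * s) := by gcongr
    _ = exp (-ℓ * s) + 216 * C / ℓ ^ 2 * exp (-(ℓ / 4) * s) := by field_simp

theorem one_sub_exp_div_le_integral_exp_neg_mul {g : ℝ → ℝ} {b ℓ : ℝ} (hb : 0 ≤ b) (hℓ : 0 < ℓ)
    (hg : ContinuousOn g (Icc 0 b)) (hle : ∀ s ∈ Icc 0 b, g s ≤ s) :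
    (1 - exp (-ℓ * b)) / ℓ ≤ ∫ s in (0 : ℝ)..b, exp (-ℓ * g s) := by
  rw [← integral_exp_neg_mul hℓ.ne']
  refine integral_mono_on hb (by apply Continuous.intervalIntegrable; fun_prop)
    ((continuous_exp.comp_continuousOn (continuousOn_const.mul hg)).intervalIntegrable_of_Icc hb)
    fun s hs => exp_le_exp.2 ?_
  nlinarith [hle s hs]

theorem integral_exp_neg_mul_le_of_sub_cube_le {g : ℝ → ℝ} {b C δ η ℓ : ℝ} (hb : 0 ≤ b)
    (hC : 0 ≤ C) (hCδ : C * δ ^ 2 ≤ 1 / 4) (hℓ : 0 < ℓ) (hg : ContinuousOn g (Icc 0 b))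
    (hnear : ∀ s ∈ Icc 0 δ, s - C * s ^ 3 ≤ g s) (hfar : ∀ s ∈ Icc δ b, η ≤ g s) :
    ∫ s in (0 : ℝ)..b, exp (-ℓ * g s) ≤ 1 / ℓ + 864 * C / ℓ ^ 3 + b * exp (-η * ℓ) := by
  have hexp (c : ℝ) : IntervalIntegrable (fun s => exp (-c * s)) volume 0 b := by
    apply Continuous.intervalIntegrable; fun_prop
  have hmajorant : ∀ s ∈ Icc 0 b, exp (-ℓ * g s) ≤
      exp (-ℓ * s) + 216 * C / ℓ ^ 2 * exp (-(ℓ / 4) * s) + exp (-η * ℓ) := by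
    intro s ⟨hs₀, hsb⟩
    have := exp_pos (-ℓ * s)
    have := exp_pos (-η * ℓ)
    have : 0 ≤ 216 * C / ℓ ^ 2 * exp (-(ℓ / 4) * s) := by positivity
    rcases le_total s δ with hsδ | hδs
    · have := exp_neg_mul_le_of_sub_cube_le hℓ hs₀ hC
        (by nlinarith [pow_le_pow_left₀ hs₀ hsδ 2]) (hnear s ⟨hs₀, hsδ⟩)
      linarith
    · have := exp_le_exp.2 (by nlinarith [hfar s ⟨hδs, hsb⟩] : -ℓ * g s ≤ -η * ℓ)
      linarith
  have hint : IntervalIntegrable (fun s => exp (-ℓ * g s)) volume 0 b :=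
    (continuous_exp.comp_continuousOn (continuousOn_const.mul hg)).intervalIntegrable_of_Icc hb
  have hJ := integral_mono_on hb hint
    (((hexp ℓ).add ((hexp (ℓ / 4)).const_mul _)).add intervalIntegrable_const) hmajorant
  rw [integral_add ((hexp ℓ).add ((hexp (ℓ / 4)).const_mul _)) intervalIntegrable_const,
    integral_add (hexp ℓ) ((hexp (ℓ / 4)).const_mul _), intervalIntegral.integral_const_mul,
    intervalIntegral.integral_const, sub_zero, smul_eq_mul] at hJ
  have h₁ := integral_exp_neg_mul_le hℓ b
  have h₂ := mul_le_mul_of_nonneg_left (integral_exp_neg_mul_le (c := ℓ / 4) (by positivity) b)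
    (by positivity : 0 ≤ 216 * C / ℓ ^ 2)
  rw [show 216 * C / ℓ ^ 2 * (1 / (ℓ / 4)) = 864 * C / ℓ ^ 3 by field_simp; ring] at h₂
  linarith

theorem tendsto_sq_mul_integral_exp_neg_mul_sub {g : ℝ → ℝ} {b C : ℝ} (hb : 0 < b) (hC : 0 ≤ C)
    (hg : ContinuousOn g (Icc 0 b)) (hpos : ∀ s ∈ Ioc 0 b, 0 < g s)
    (hle : ∀ s ∈ Icc 0 b, g s ≤ s) (hge : ∀ s ∈ Icc 0 b, s - C * s ^ 3 ≤ g s) :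
    Tendsto (fun ℓ => ℓ ^ 2 * (∫ s in (0 : ℝ)..b, exp (-ℓ * g s)) - ℓ) atTop (𝓝 0) := by
  obtain ⟨δ, hδ, hδb, hCδ⟩ : ∃ δ, 0 < δ ∧ δ ≤ b ∧ C * δ ^ 2 ≤ 1 / 4 := by
    refine ⟨min b (1 / (2 * (C + 1))), by positivity, min_le_left _ _, ?_⟩
    have h := (le_div_iff₀ (by positivity)).1 (min_le_right b (1 / (2 * (C + 1))))
    have hm : 0 ≤ min b (1 / (2 * (C + 1))) := by positivity
    nlinarith [mul_le_mul h h (by positivity) zero_le_one, sq_nonneg (min b (1 / (2 * (C + 1))))]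
  obtain ⟨η, hη, hfar⟩ : ∃ η, 0 < η ∧ ∀ s ∈ Icc δ b, η ≤ g s := by
    obtain ⟨s₀, hs₀, hmin⟩ := isCompact_Icc.exists_isMinOn (nonempty_Icc.2 hδb)
      (hg.mono (Icc_subset_Icc_left hδ.le))
    exact ⟨g s₀, hpos s₀ ⟨hδ.trans_le hs₀.1, hs₀.2⟩, hmin⟩
  have hlower : ∀ ℓ > 0,
      -(ℓ * exp (-b * ℓ)) ≤ ℓ ^ 2 * (∫ s in (0 : ℝ)..b, exp (-ℓ * g s)) - ℓ := by
    intro ℓ hℓ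
    have h := (div_le_iff₀ hℓ).1 (one_sub_exp_div_le_integral_exp_neg_mul hb.le hℓ hg hle)
    rw [show -b * ℓ = -ℓ * b by ring]
    nlinarith [mul_le_mul_of_nonneg_left h hℓ.le]
  have hupper : ∀ ℓ > 0, ℓ ^ 2 * (∫ s in (0 : ℝ)..b, exp (-ℓ * g s)) - ℓ ≤
      864 * C / ℓ + b * (ℓ ^ 2 * exp (-η * ℓ)) := by
    intro ℓ hℓ
    calc ℓ ^ 2 * (∫ s in (0 : ℝ)..b, exp (-ℓ * g s)) - ℓ
        ≤ ℓ ^ 2 * (1 / ℓ + 864 * C / ℓ ^ 3 + b * exp (-η * ℓ)) - ℓ := by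
          gcongr
          exact integral_exp_neg_mul_le_of_sub_cube_le hb.le hC hCδ hℓ hg
            (fun s hs => hge s ⟨hs.1, hs.2.trans hδb⟩) hfar
      _ = 864 * C / ℓ + b * (ℓ ^ 2 * exp (-η * ℓ)) := by field_simp; ring
  have hlower_tendsto : Tendsto (fun ℓ : ℝ => -(ℓ * exp (-b * ℓ))) atTop (𝓝 0) := by
    simpa using (tendsto_rpow_mul_exp_neg_mul_atTop_nhds_zero 1 b hb).neg
  have hupper_tendsto :
      Tendsto (fun ℓ : ℝ => 864 * C / ℓ + b * (ℓ ^ 2 * exp (-η * ℓ))) atTop (𝓝 0) := by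
    simpa using (tendsto_const_nhds.div_atTop tendsto_id).add
      ((tendsto_rpow_mul_exp_neg_mul_atTop_nhds_zero 2 η hη).const_mul b)
  exact tendsto_of_tendsto_of_tendsto_of_le_of_le' hlower_tendsto hupper_tendsto
    ((eventually_gt_atTop 0).mono hlower) ((eventually_gt_atTop 0).mono hupper)

theorem integral_eq_two_mul_integral_half_of_symm {f : ℝ → ℝ} {a : ℝ}
    (hf : IntervalIntegrable f volume 0 a) (hsymm : ∀ x, f (a - x) = f x) :
    ∫ x in (0 : ℝ)..a, f x = 2 * ∫ x in (0 : ℝ)..a / 2, f x := by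
  have hmid : a / 2 ∈ uIcc 0 a := by
    rcases le_total 0 a with ha | ha
    · exact mem_uIcc_of_le (by linarith) (by linarith)
    · exact mem_uIcc_of_ge (by linarith) (by linarith)
  have hleft := hf.mono_set (uIcc_subset_uIcc_left hmid)
  have hright := hf.mono_set (uIcc_subset_uIcc_right hmid)
  rw [← integral_add_adjacent_intervals hleft hright, two_mul]
  congr 1
  simpa [hsymm, show a - a / 2 = a / 2 by ring] using
    integral_comp_sub_left f a (a := a / 2) (b := a)

theorem tendsto_inv_two_mul_sub_half {J : ℝ → ℝ}
    (h : Tendsto (fun ℓ => ℓ ^ 2 * J ℓ - ℓ) atTop (𝓝 0)) :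
    Tendsto (fun ℓ => (2 * J ℓ)⁻¹ - ℓ / 2) atTop (𝓝 0) := by
  have hlin : Tendsto (fun ℓ => ℓ * J ℓ) atTop (𝓝 1) := by
    have := (h.mul tendsto_inv_atTop_zero).add_const 1
    rw [zero_mul, zero_add] at this
    refine this.congr' ?_
    filter_upwards [eventually_ne_atTop 0] with ℓ hℓ
    field_simp
    ring
  have := (h.div (hlin.const_mul 2) (by norm_num)).neg
  rw [zero_div, neg_zero] at this
  refine this.congr' ?_
  filter_upwards [eventually_ne_atTop 0, hlin.eventually_ne one_ne_zero] with ℓ hℓ hJ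
  have hJ' : J ℓ ≠ 0 := right_ne_zero_of_mul hJ
  simp only [Pi.div_apply]
  field_simp
  ring

/-- `|C_{ℓ,κ}| = circleMagnitude D_κ ℓ`. -/
noncomputable def circleMagnitude (d : ℝ → ℝ) (ℓ : ℝ) : ℝ := (∫ s in (0 : ℝ)..1, exp (-ℓ * d s))⁻¹

theorem tendsto_circleMagnitude_sub_half {Φ : ℝ → ℝ} {c : ℝ} (hc : 0 ≤ c) (hΦ : Continuous Φ)
    (hpos : ∀ y ∈ Ioc 0 1, 0 < Φ y) (hle : ∀ x ∈ Icc 0 (π / 2), Φ (sin x) ≤ x)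
    (hge : ∀ y ∈ Icc 0 1, y - c * y ^ 3 ≤ Φ y) :
    Tendsto (fun ℓ => circleMagnitude (fun s => Φ (sin (π * s)) / π) ℓ - ℓ / 2) atTop (𝓝 0) := by
  have hsymm (ℓ : ℝ) :
      ∫ s in (0 : ℝ)..1, exp (-ℓ * (Φ (sin (π * s)) / π)) =
        2 * ∫ s in (0 : ℝ)..1 / 2, exp (-ℓ * (Φ (sin (π * s)) / π)) :=
    integral_eq_two_mul_integral_half_of_symm (by apply Continuous.intervalIntegrable; fun_prop)
      fun s => by rw [mul_sub, mul_one, sin_pi_sub]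
  simp only [circleMagnitude, hsymm]
  apply tendsto_inv_two_mul_sub_half
  refine tendsto_sq_mul_integral_exp_neg_mul_sub (C := π ^ 2 * (1 / 6 + c)) (by norm_num)
    (by positivity) (by fun_prop) ?_ ?_ ?_
  · rintro s ⟨hs₀, hs₁⟩
    have hsin : sin (π * s) ∈ Ioc 0 1 :=
      ⟨sin_pos_of_pos_of_lt_pi (by positivity) (by nlinarith [pi_pos]), sin_le_one _⟩
    exact div_pos (hpos _ hsin) pi_pos
  · rintro s ⟨hs₀, hs₁⟩
    rw [div_le_iff₀ pi_pos, mul_comm]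
    exact hle _ ⟨by positivity, by nlinarith [pi_pos]⟩
  · rintro s ⟨hs₀, hs₁⟩
    have hx₀ : 0 ≤ π * s := by positivity
    have hsin₀ : 0 ≤ sin (π * s) := sin_nonneg_of_nonneg_of_le_pi hx₀ (by nlinarith [pi_pos])
    have hcube := pow_le_pow_left₀ hsin₀ (sin_le hx₀) 3
    have hΦsin := hge _ ⟨hsin₀, sin_le_one _⟩
    -- `Φ (sin x) ≥ sin x - c sin³ x ≥ x - x³/6 - c x³`
    rw [le_div_iff₀ pi_pos]
    nlinarith [sin_ge_sub_cube hx₀, mul_le_mul_of_nonneg_left hcube hc]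

theorem sub_cube_div_six_le_arsinh {x : ℝ} (hx : 0 ≤ x) : x - x ^ 3 / 6 ≤ arsinh x := by
  let f : ℝ → ℝ := fun y => arsinh y - y + y ^ 3 / 6
  have hf : ∀ y, HasDerivAt f ((√(1 + y ^ 2))⁻¹ - 1 + y ^ 2 / 2) y := fun y => by
    have hcube : HasDerivAt (fun z : ℝ => z ^ 3 / 6) (y ^ 2 / 2) y :=
      ((hasDerivAt_pow 3 y).div_const 6).congr_deriv (by push_cast; ring)
    exact ((hasDerivAt_arsinh y).sub (hasDerivAt_id y)).add hcube
  have hmono : Monotone f := monotone_of_deriv_nonneg (fun y => (hf y).differentiableAt) fun y => by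
    rw [(hf y).deriv]
    set r := √(1 + y ^ 2)
    have hr2 : r ^ 2 = 1 + y ^ 2 := sq_sqrt (by positivity)
    have hr1 : 1 ≤ r := one_le_sqrt.2 (by nlinarith)
    have : r⁻¹ - 1 + y ^ 2 / 2 = (r - 1) ^ 2 * (r + 2) / (2 * r) := by
      field_simp; nlinarith
    rw [this]; positivity
  have := hmono hx
  simp only [f, arsinh_zero] at this
  linarith

theorem arsinh_le_self {x : ℝ} (hx : 0 ≤ x) : arsinh x ≤ x := by
  simpa using self_le_sinh_iff.2 (arsinh_nonneg_iff.2 hx)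

theorem mul_sin_le_sin_mul {a x : ℝ} (ha₀ : 0 ≤ a) (ha₁ : a ≤ 1) (hx₀ : 0 ≤ x) (hxπ : x ≤ π) :
    a * sin x ≤ sin (a * x) := by
  have h := strictConcaveOn_sin_Icc.concaveOn.2 (left_mem_Icc.2 pi_pos.le) ⟨hx₀, hxπ⟩
    (sub_nonneg.2 ha₁) ha₀ (by ring)
  simpa using h

theorem arcsin_mul_sin_le {a x : ℝ} (ha₀ : 0 ≤ a) (ha₁ : a ≤ 1) (hx₀ : 0 ≤ x) (hx : x ≤ π / 2) :
    arcsin (a * sin x) ≤ a * x := by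
  have hsin : 0 ≤ sin x := sin_nonneg_of_nonneg_of_le_pi hx₀ (by linarith [pi_pos])
  rw [arcsin_le_iff_le_sin ⟨by nlinarith, by nlinarith [sin_le_one x]⟩
    ⟨by nlinarith [pi_pos], by nlinarith⟩]
  exact mul_sin_le_sin_mul ha₀ ha₁ hx₀ (by linarith [pi_pos])

theorem self_le_arcsin {y : ℝ} (hy₀ : 0 ≤ y) (hy₁ : y ≤ 1) : y ≤ arcsin y := by
  rw [le_arcsin_iff_sin_le ⟨by linarith [pi_pos], by linarith [one_le_pi_div_two]⟩
    ⟨by linarith, hy₁⟩]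
  exact sin_le hy₀

theorem tendsto_circleMagnitude_sin_sub_half :
    Tendsto (fun ℓ => circleMagnitude (fun s => sin (π * s) / π) ℓ - ℓ / 2) atTop (𝓝 0) :=
  tendsto_circleMagnitude_sub_half (Φ := fun y => y) le_rfl continuous_id
    (fun _ hy => hy.1) (fun _ hx => sin_le hx.1) (fun y _ => by simp)

theorem tendsto_circleMagnitude_arcsin_sub_half {a : ℝ} (ha₀ : 0 < a) (ha₁ : a ≤ 1) :
    Tendsto (fun ℓ => circleMagnitude (fun s => arcsin (a * sin (π * s)) / a / π) ℓ - ℓ / 2)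
      atTop (𝓝 0) := by
  refine tendsto_circleMagnitude_sub_half (Φ := fun y => arcsin (a * y) / a) le_rfl
    (by fun_prop) ?_ ?_ ?_
  · rintro y ⟨hy₀, -⟩
    exact div_pos (arcsin_pos.2 (by positivity)) ha₀
  · rintro x ⟨hx₀, hx⟩
    rw [div_le_iff₀ ha₀, mul_comm x]
    exact arcsin_mul_sin_le ha₀.le ha₁ hx₀ hx
  · rintro y ⟨hy₀, hy₁⟩
    rw [zero_mul, sub_zero, le_div_iff₀ ha₀, mul_comm]
    exact self_le_arcsin (by positivity) (by nlinarith)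

theorem tendsto_circleMagnitude_arsinh_sub_half {a : ℝ} (ha : 0 < a) :
    Tendsto (fun ℓ => circleMagnitude (fun s => arsinh (a * sin (π * s)) / a / π) ℓ - ℓ / 2)
      atTop (𝓝 0) := by
  refine tendsto_circleMagnitude_sub_half (Φ := fun y => arsinh (a * y) / a) (c := a ^ 2 / 6)
    (by positivity) ((continuous_const.mul continuous_id).arsinh.div_const a) ?_ ?_ ?_
  · rintro y ⟨hy₀, -⟩
    exact div_pos (arsinh_pos_iff.2 (by positivity)) ha
  · rintro x ⟨hx₀, hx⟩
    have hsin : 0 ≤ sin x := sin_nonneg_of_nonneg_of_le_pi hx₀ (by linarith [pi_pos])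
    rw [div_le_iff₀ ha, mul_comm x]
    exact (arsinh_le_self (by positivity)).trans (mul_le_mul_of_nonneg_left (sin_le hx₀) ha.le)
  · rintro y ⟨hy₀, -⟩
    rw [le_div_iff₀ ha]
    linarith [sub_cube_div_six_le_arsinh (mul_nonneg ha.le hy₀)]

/-- For every relative curvature `κ ∈ (−∞, 1]`, the magnitude
`|C_{ℓ,κ}| = (∫_0^1 exp(−ℓ·D_κ(s)) ds)⁻¹` of the circle of circumference `ℓ` with the
`κ`-metric, where `D_κ(s) = (1/(√κ·π)) arcsin(√κ sin(πs))` for `0 < κ ≤ 1`,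
`D_0(s) = (1/π) sin(πs)`, and `D_κ(s) = (1/(√(−κ)·π)) arsinh(√(−κ) sin(πs))` for
`κ < 0`, satisfies `|C_{ℓ,κ}| − ℓ/2 → 0` as `ℓ → ∞`. -/
theorem curved_circle_magnitude_asymptotics (D : ℝ → ℝ → ℝ)
    (hDpos : ∀ κ : ℝ, 0 < κ → κ ≤ 1 → ∀ s : ℝ,
      D κ s = (1 / (Real.sqrt κ * Real.pi)) * Real.arcsin (Real.sqrt κ * Real.sin (Real.pi * s)))
    (hD0 : ∀ s : ℝ, D 0 s = (1 / Real.pi) * Real.sin (Real.pi * s))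
    (hDneg : ∀ κ : ℝ, κ < 0 → ∀ s : ℝ,
      D κ s = (1 / (Real.sqrt (-κ) * Real.pi)) *
        Real.arsinh (Real.sqrt (-κ) * Real.sin (Real.pi * s))) :
    ∀ κ : ℝ, κ ≤ 1 →
      Tendsto (fun ℓ : ℝ => (∫ s in (0 : ℝ)..1, Real.exp (-ℓ * D κ s))⁻¹ - ℓ / 2)
        atTop (𝓝 0) := by
  intro κ hκ
  rcases lt_trichotomy κ 0 with hκ₀ | rfl | hκ₀
  · have hD : D κ = fun s => arsinh (√(-κ) * sin (π * s)) / √(-κ) / π :=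
      funext fun s => by rw [hDneg κ hκ₀]; field_simp
    rw [hD]
    exact tendsto_circleMagnitude_arsinh_sub_half (sqrt_pos.2 (neg_pos.2 hκ₀))
  · have hD : D 0 = fun s => sin (π * s) / π := funext fun s => by rw [hD0]; ring
    rw [hD]
    exact tendsto_circleMagnitude_sin_sub_half
  · have hD : D κ = fun s => arcsin (√κ * sin (π * s)) / √κ / π :=
      funext fun s => by rw [hDpos κ hκ₀ hκ]; field_simp
    rw [hD]
    exact tendsto_circleMagnitude_arcsin_sub_half (sqrt_pos.2 hκ₀) (sqrt_le_one.2 hκ)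
end
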